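/- Let U be the 2×2 diagonal unitary with diagonal entries e^{iπ/4} and e^{−iπ/4} (i.e., U = e^{iπZ/4}), and let P = |+⟩⟨+| be the rank-one projection onto (1/√2)(1,1) ∈ ℂ². Then the vectors U(1/√2)(1,1) and Uᴴ(1/√2)(1,1) are orthogonal, and (1/2)‖U P Uᴴ − Uᴴ P U‖₁ = 1. -/

import Mathlib

/-!
For orthonormal `ψ, φ` the difference `D = |ψ⟩⟨ψ| - |φ⟩⟨φ|` is Hermitian with
`D² = |ψ⟩⟨ψ| + |φ⟩⟨φ|`, a projection of trace 2. Whenever `Aᴴ A` is a projection its eigenvalues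
lie in `{0, 1}`, so they equal their square roots and `‖A‖₁ = tr (Aᴴ A)`; hence `‖D‖₁ = 2`.
The two states `U|+⟩` and `Uᴴ|+⟩` are orthonormal because `U` is unitary and `U² = i Z` maps
`|+⟩` to a multiple of `|-⟩`.
-/

open Matrix ComplexOrder

noncomputable def traceNorm {n : Type*} [Fintype n] [DecidableEq n]
    (A : Matrix n n ℂ) : ℝ :=
  (((Matrix.posSemidef_conjTranspose_mul_self A).1.eigenvectorUnitary.1 *
      diagonal ((fun x : ℝ => (x : ℂ)) ∘ (Real.sqrt ·) ∘ (Matrix.posSemidef_conjTranspose_mul_self A).1.eigenvalues) *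
      (star (Matrix.posSemidef_conjTranspose_mul_self A).1.eigenvectorUnitary : Matrix n n ℂ)).trace).re

noncomputable def ketbra {d : ℕ} (ψ : Fin d → ℂ) : Matrix (Fin d) (Fin d) ℂ :=
  fun i j => ψ i * (starRingEnd ℂ) (ψ j)

noncomputable def kronPow {d : ℕ} (M : Matrix (Fin d) (Fin d) ℂ) (k : ℕ) :
    Matrix (Fin k → Fin d) (Fin k → Fin d) ℂ :=
  fun i j => ∏ t : Fin k, M (i t) (j t)

noncomputable def fid {d : ℕ} (ψ : Fin d → ℂ) (σ : Matrix (Fin d) (Fin d) ℂ) : ℝ :=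
  (∑ i, ∑ j, (starRingEnd ℂ) (ψ i) * σ i j * ψ j).re

section TraceNorm

variable {n : Type*} [Fintype n] [DecidableEq n]

theorem traceNorm_eq_sum_sqrt_eigenvalues (A : Matrix n n ℂ) :
    traceNorm A = ∑ i, √((posSemidef_conjTranspose_mul_self A).1.eigenvalues i) := by
  rw [traceNorm, trace_mul_cycle, Unitary.coe_star_mul_self, one_mul, trace_diagonal,
    Complex.re_sum]
  rfl

theorem Matrix.IsHermitian.eigenvalues_eq_zero_or_one {𝕜 : Type*} [RCLike 𝕜] {A : Matrix n n 𝕜}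
    (hA : A.IsHermitian) (hP : IsIdempotentElem A) (i : n) :
    hA.eigenvalues i = 0 ∨ hA.eigenvalues i = 1 :=
  hP.spectrum_subset ℝ (hA.eigenvalues_mem_spectrum_real i)

theorem traceNorm_eq_re_trace_of_isIdempotentElem {A : Matrix n n ℂ}
    (hA : IsIdempotentElem (Aᴴ * A)) : traceNorm A = (Aᴴ * A).trace.re := by
  set hH := (posSemidef_conjTranspose_mul_self A).1
  have hsqrt (i : n) : √(hH.eigenvalues i) = hH.eigenvalues i := by
    rcases hH.eigenvalues_eq_zero_or_one hA i with h | h <;> simp [h]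
  rw [traceNorm_eq_sum_sqrt_eigenvalues, hH.trace_eq_sum_eigenvalues, Complex.re_sum]
  simp [hsqrt]

end TraceNorm

section Ketbra

variable {d : ℕ}

theorem ketbra_eq_vecMulVec (ψ : Fin d → ℂ) : ketbra ψ = vecMulVec ψ (star ψ) := rfl

theorem conjTranspose_ketbra (ψ : Fin d → ℂ) : (ketbra ψ)ᴴ = ketbra ψ := by
  simp [ketbra_eq_vecMulVec]

theorem trace_ketbra (ψ : Fin d → ℂ) : (ketbra ψ).trace = star ψ ⬝ᵥ ψ := by
  rw [ketbra_eq_vecMulVec, trace_vecMulVec, dotProduct_comm]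

theorem ketbra_mul_ketbra (ψ φ : Fin d → ℂ) :
    ketbra ψ * ketbra φ = (star ψ ⬝ᵥ φ) • vecMulVec ψ (star φ) := by
  rw [ketbra_eq_vecMulVec, ketbra_eq_vecMulVec, vecMulVec_mul_vecMulVec, vecMulVec_smul]

theorem ketbra_mul_self_of_dotProduct_eq_one {ψ : Fin d → ℂ} (hψ : star ψ ⬝ᵥ ψ = 1) :
    ketbra ψ * ketbra ψ = ketbra ψ := by
  rw [ketbra_mul_ketbra, hψ, one_smul, ketbra_eq_vecMulVec]

theorem ketbra_mul_ketbra_of_dotProduct_eq_zero {ψ φ : Fin d → ℂ} (hψφ : star ψ ⬝ᵥ φ = 0) :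
    ketbra ψ * ketbra φ = 0 := by
  rw [ketbra_mul_ketbra, hψφ, zero_smul]

theorem mul_ketbra_mul_conjTranspose (U : Matrix (Fin d) (Fin d) ℂ) (ψ : Fin d → ℂ) :
    U * ketbra ψ * Uᴴ = ketbra (U *ᵥ ψ) := by
  rw [ketbra_eq_vecMulVec, ketbra_eq_vecMulVec, mul_vecMulVec, vecMulVec_mul, star_mulVec]

end Ketbra

theorem traceNorm_ketbra_sub_ketbra_of_orthonormal {d : ℕ} {ψ φ : Fin d → ℂ}
    (hψ : star ψ ⬝ᵥ ψ = 1) (hφ : star φ ⬝ᵥ φ = 1) (hψφ : star ψ ⬝ᵥ φ = 0) :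
    traceNorm (ketbra ψ - ketbra φ) = 2 := by
  have hφψ : star φ ⬝ᵥ ψ = 0 := by rw [star_dotProduct, hψφ, star_zero]
  have hsq : (ketbra ψ - ketbra φ)ᴴ * (ketbra ψ - ketbra φ) = ketbra ψ + ketbra φ := by
    rw [conjTranspose_sub, conjTranspose_ketbra, conjTranspose_ketbra, sub_mul, mul_sub, mul_sub,
      ketbra_mul_self_of_dotProduct_eq_one hψ, ketbra_mul_self_of_dotProduct_eq_one hφ,
      ketbra_mul_ketbra_of_dotProduct_eq_zero hψφ, ketbra_mul_ketbra_of_dotProduct_eq_zero hφψ]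
    abel
  have hproj : IsIdempotentElem (ketbra ψ + ketbra φ) := by
    rw [IsIdempotentElem, add_mul, mul_add, mul_add,
      ketbra_mul_self_of_dotProduct_eq_one hψ, ketbra_mul_self_of_dotProduct_eq_one hφ,
      ketbra_mul_ketbra_of_dotProduct_eq_zero hψφ, ketbra_mul_ketbra_of_dotProduct_eq_zero hφψ]
    abel
  rw [traceNorm_eq_re_trace_of_isIdempotentElem (hsq ▸ hproj), hsq, trace_add, trace_ketbra,
    trace_ketbra, hψ, hφ]
  norm_num

section Unitary

variable {n α : Type*} [Fintype n] [DecidableEq n] [CommRing α] [StarRing α]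

theorem Matrix.diagonal_mem_unitaryGroup {d : n → α} (hd : ∀ i, d i ∈ unitary α) :
    diagonal d ∈ unitaryGroup n α := by
  rw [mem_unitaryGroup_iff, star_eq_conjTranspose, diagonal_conjTranspose, diagonal_mul_diagonal,
    ← diagonal_one]
  exact congrArg diagonal (funext fun i ↦ Unitary.mul_star_self_of_mem (hd i))

theorem Matrix.star_mulVec_dotProduct_mulVec_of_mem_unitaryGroup {U : Matrix n n α}
    (hU : U ∈ unitaryGroup n α) (v w : n → α) :
    star (U *ᵥ v) ⬝ᵥ (U *ᵥ w) = star v ⬝ᵥ w := by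
  rw [star_mulVec, dotProduct_mulVec, vecMul_vecMul, ← star_eq_conjTranspose,
    Unitary.star_mul_self_of_mem hU, vecMul_one]

end Unitary

theorem traceNorm_conj_ketbra_sub_conj_ketbra {d : ℕ} {U : Matrix (Fin d) (Fin d) ℂ}
    (hU : U ∈ unitaryGroup (Fin d) ℂ) {ψ : Fin d → ℂ} (hψ : star ψ ⬝ᵥ ψ = 1)
    (horth : star (U *ᵥ ψ) ⬝ᵥ (Uᴴ *ᵥ ψ) = 0) :
    traceNorm (U * ketbra ψ * Uᴴ - Uᴴ * ketbra ψ * U) = 2 := by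
  have hadj : Uᴴ * ketbra ψ * U = ketbra (Uᴴ *ᵥ ψ) := by
    simpa using mul_ketbra_mul_conjTranspose Uᴴ ψ
  rw [mul_ketbra_mul_conjTranspose, hadj]
  exact traceNorm_ketbra_sub_ketbra_of_orthonormal
    (star_mulVec_dotProduct_mulVec_of_mem_unitaryGroup hU ψ ψ ▸ hψ)
    (star_mulVec_dotProduct_mulVec_of_mem_unitaryGroup (Unitary.star_mem hU) ψ ψ ▸ hψ) horth

theorem star_dotProduct_self_inv_sqrt_two :
    star ![((√2 : ℝ) : ℂ)⁻¹, ((√2 : ℝ) : ℂ)⁻¹] ⬝ᵥ ![((√2 : ℝ) : ℂ)⁻¹, ((√2 : ℝ) : ℂ)⁻¹] = 1 := by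
  simp only [dotProduct, Fin.sum_univ_two, Pi.star_apply, cons_val_zero, cons_val_one,
    Complex.star_def, map_inv₀, Complex.conj_ofReal]
  rw [← mul_inv, ← Complex.ofReal_mul, Real.mul_self_sqrt zero_le_two]
  norm_num

theorem star_diagonal_mulVec_dotProduct_conjTranspose_mulVec {e : ℂ}
    (he : star (e ^ 2) = -e ^ 2) (s : ℂ) :
    star (diagonal ![e, star e] *ᵥ ![s, s]) ⬝ᵥ ((diagonal ![e, star e])ᴴ *ᵥ ![s, s]) = 0 := by
  rw [star_pow] at he
  simp only [diagonal_conjTranspose, dotProduct, Fin.sum_univ_two, Pi.star_apply,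
    mulVec_diagonal, cons_val_zero, cons_val_one, star_mul', star_star]
  linear_combination (star s * s) * he

namespace Complex

theorem star_exp_I_mul_ofReal (θ : ℝ) : star (exp (I * θ)) = exp (-(I * θ)) := by
  rw [star_def, ← exp_conj]
  simp

theorem exp_I_mul_ofReal_mem_unitary (θ : ℝ) : exp (I * θ) ∈ unitary ℂ := by
  rw [Unitary.mem_iff_star_mul_self, star_exp_I_mul_ofReal, ← exp_add, neg_add_cancel, exp_zero]

theorem exp_I_mul_pi_div_four_sq : exp (I * (Real.pi / 4)) ^ 2 = I := by
  rw [← exp_nat_mul]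
  convert exp_pi_div_two_mul_I using 2
  push_cast
  ring

end Complex

/-- The explicit counterexample of Theorem 4: U|+⟩ and Uᴴ|+⟩ are orthogonal
for U = e^{iπZ/4}, and the corresponding pure states are at trace distance 1. -/
theorem counterexample_notblind :
    letI U : Matrix (Fin 2) (Fin 2) ℂ :=
      Matrix.diagonal ![Complex.exp (Complex.I * (Real.pi / 4)),
        Complex.exp (-(Complex.I * (Real.pi / 4)))]
    letI plus : Fin 2 → ℂ := ![((Real.sqrt 2 : ℝ) : ℂ)⁻¹, ((Real.sqrt 2 : ℝ) : ℂ)⁻¹]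
    (∑ i, (starRingEnd ℂ) (U.mulVec plus i) * (Uᴴ.mulVec plus i) = 0) ∧
      (1 / 2 : ℝ) * traceNorm (U * ketbra plus * Uᴴ - Uᴴ * ketbra plus * U) = 1 := by
  have he := Complex.exp_I_mul_ofReal_mem_unitary (Real.pi / 4)
  have hstar := Complex.star_exp_I_mul_ofReal (Real.pi / 4)
  push_cast at he hstar
  rw [← hstar]
  set e := Complex.exp (Complex.I * (Real.pi / 4))
  have hU : diagonal ![e, star e] ∈ unitaryGroup (Fin 2) ℂ :=
    diagonal_mem_unitaryGroup (Fin.forall_fin_two.2 ⟨he, Unitary.star_mem he⟩)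
  have he_sq : star (e ^ 2) = -e ^ 2 := by
    rw [Complex.exp_I_mul_pi_div_four_sq, Complex.star_def, Complex.conj_I]
  have horth := star_diagonal_mulVec_dotProduct_conjTranspose_mulVec he_sq ((√2 : ℝ) : ℂ)⁻¹
  refine ⟨horth, ?_⟩
  rw [traceNorm_conj_ketbra_sub_conj_ketbra hU star_dotProduct_self_inv_sqrt_two horth]
  norm_num
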